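/- Let α ∈ ℝ with α ∉ {0, −1}, and let W be the truncated Coulomb (Muffin-tin) potential W(r) = α(r^{−1} − 1) for 0 < r ≤ 1 and W(r) = 0 for r > 1. Then for every w ∈ (0,1), the deflection angle satisfies θ(w) = 2 arctan( (α/(1+α)) · √(1−w²)/w ) − 2π·𝟙[α < −1]. -/

import Mathlib

open MeasureTheory Set
open scoped ENNReal

noncomputable section

/-- The integral `∫_{r₀}^∞ r^{-2} (1 - 2W(r) - w²r^{-2})^{-1/2} dr ∈ [0,∞]` appearing in
the definition of the deflection angle `θ(w) = π - 2w·(this integral)`. -/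
def thetaInt (W : ℝ → ℝ) (rz w : ℝ) : ℝ≥0∞ :=
  ∫⁻ r in Set.Ioi rz, ENNReal.ofReal (1 / (r ^ 2 * Real.sqrt (1 - 2 * W r - w ^ 2 / r ^ 2)))

/-- The deflection angle `θ(w) = π - 2w ∫_{r₀}^∞ r^{-2}(1-2W(r)-w²r^{-2})^{-1/2} dr`. -/
def deflAngle (W : ℝ → ℝ) (rz w : ℝ) : ℝ :=
  Real.pi - 2 * w * (thetaInt W rz w).toReal

/-- `rz` is the largest zero in `(0,1)` of `r ↦ 1 - 2W(r) - w²r^{-2}`. -/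
def IsLargestZero (W : ℝ → ℝ) (w rz : ℝ) : Prop :=
  rz ∈ Set.Ioo (0 : ℝ) 1 ∧ 1 - 2 * W rz - w ^ 2 / rz ^ 2 = 0 ∧
    ∀ r, rz < r → 1 - 2 * W r - w ^ 2 / r ^ 2 ≠ 0

/-- The truncated Coulomb (Muffin-tin) potential `W(r) = α(r⁻¹ - 1)` for `0 < r ≤ 1`,
`W(r) = 0` for `r > 1`. -/
def muffinTin (α : ℝ) : ℝ → ℝ := fun r => if r ≤ 1 then α * (r⁻¹ - 1) else 0

/-! With `u = 1/r` the integrand becomes `du / √Q(u)` for a quadratic `Q`: on each side of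
`r = 1` that of a Coulomb potential, of strength `a = α` inside and `a = 0` outside. Writing
`B² = w²(1 + 2a) + a²` one has `B² - (w²u + a)² = w² Q(u)`, so `-arcsin((w²u + a)/B)/w` is a
primitive, and at the turning point its argument is `1`. This gives
`θ = 2 arcsin((w² + α)/B) - 2 arcsin w`; writing both arcsines as arctangents and subtracting them
produces the closed form, with the branch correction `-2π` exactly when `1 + α < 0`. -/

open Real Filter Topology

section LIntegralOfDeriv

variable {f f' : ℝ → ℝ} {a b l : ℝ}

theorem lintegral_Ioc_ofReal_of_hasDerivAt_of_nonneg (hab : a ≤ b)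
    (hcont : ContinuousOn f (Icc a b)) (hderiv : ∀ x ∈ Ioo a b, HasDerivAt f (f' x) x)
    (hpos : ∀ x ∈ Ioo a b, 0 ≤ f' x) :
    ∫⁻ x in Ioc a b, ENNReal.ofReal (f' x) = ENNReal.ofReal (f b - f a) := by
  have hint := intervalIntegral.integrableOn_deriv_of_nonneg hcont hderiv hpos
  have hpos_ae : 0 ≤ᵐ[volume.restrict (Ioc a b)] f' := by
    rw [← Measure.restrict_congr_set Ioo_ae_eq_Ioc]
    exact ae_restrict_of_forall_mem measurableSet_Ioo hpos
  rw [← ofReal_integral_eq_lintegral_ofReal hint hpos_ae, ← intervalIntegral.integral_of_le hab,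
    intervalIntegral.integral_eq_sub_of_hasDerivAt_of_le hab hcont hderiv
      ((intervalIntegrable_iff_integrableOn_Ioc_of_le hab).2 hint)]

theorem lintegral_Ioi_ofReal_of_hasDerivAt_of_nonneg' (hderiv : ∀ x ∈ Ici a, HasDerivAt f (f' x) x)
    (hpos : ∀ x ∈ Ioi a, 0 ≤ f' x) (hf : Tendsto f atTop (𝓝 l)) :
    ∫⁻ x in Ioi a, ENNReal.ofReal (f' x) = ENNReal.ofReal (l - f a) := by
  rw [← ofReal_integral_eq_lintegral_ofReal (integrableOn_Ioi_deriv_of_nonneg' hderiv hpos hf)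
    (ae_restrict_of_forall_mem measurableSet_Ioi hpos),
    integral_Ioi_of_hasDerivAt_of_nonneg' hderiv hpos hf]

end LIntegralOfDeriv

section Trigonometry

theorem arcsin_div_sqrt_sq_add_sq (x : ℝ) {y : ℝ} (hy : 0 < y) :
    arcsin (x / √(x ^ 2 + y ^ 2)) = arctan (x / y) := by
  have hsqrt : √(1 + (x / y) ^ 2) = √(x ^ 2 + y ^ 2) / y := by
    rw [show 1 + (x / y) ^ 2 = (x ^ 2 + y ^ 2) / y ^ 2 by field_simp; ring,
      sqrt_div' _ (sq_nonneg y), sqrt_sq hy.le]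
  rw [arctan_eq_arcsin, hsqrt]
  congr 1
  have : 0 < √(x ^ 2 + y ^ 2) := sqrt_pos.2 (by positivity)
  field_simp

theorem arctan_sub_arctan {x y : ℝ} (hy : 0 < y) (hxy : 1 + x * y ≠ 0) :
    arctan x - arctan y = arctan ((x - y) / (1 + x * y)) - if 1 + x * y < 0 then π else 0 := by
  have harg : (x + -y) / (1 - x * -y) = (x - y) / (1 + x * y) := by ring_nf
  rw [sub_eq_add_neg (arctan x), ← arctan_neg]
  split_ifs with hneg
  · have hx : x < 0 := by nlinarith
    rw [arctan_add_eq_sub_pi (by linarith) hx, harg]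
  · rw [arctan_add (by linarith [lt_of_le_of_ne (not_lt.1 hneg) (Ne.symm hxy)]), harg,
      sub_zero]

end Trigonometry

section Coulomb

/-- The radicand `1 - 2W(r) - w²r⁻²` for the Coulomb potential `W(r) = a(r⁻¹ - 1)`. -/
def coulombRadicand (a w r : ℝ) : ℝ := 1 + 2 * a - 2 * a / r - w ^ 2 / r ^ 2

def coulombPrimitive (a w B r : ℝ) : ℝ := -arcsin ((w ^ 2 / r + a) / B) / w

variable {a w B r x y : ℝ}

theorem sq_sub_sq_eq_mul_coulombRadicand (hB : B ^ 2 = w ^ 2 * (1 + 2 * a) + a ^ 2) (hr : r ≠ 0) :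
    B ^ 2 - (w ^ 2 / r + a) ^ 2 = w ^ 2 * coulombRadicand a w r := by
  rw [hB, coulombRadicand]
  field_simp
  ring

theorem hasDerivAt_coulombPrimitive (hw : 0 < w) (hB : 0 < B)
    (hB2 : B ^ 2 = w ^ 2 * (1 + 2 * a) + a ^ 2) (hr : 0 < r) (hQ : 0 < coulombRadicand a w r) :
    HasDerivAt (coulombPrimitive a w B) (1 / (r ^ 2 * √(coulombRadicand a w r))) r := by
  have hsqrt : √(1 - ((w ^ 2 / r + a) / B) ^ 2) = w * √(coulombRadicand a w r) / B := by
    rw [← sqrt_sq (by positivity : 0 ≤ w * √(coulombRadicand a w r) / B)]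
    congr 1
    rw [div_pow, div_pow, mul_pow, sq_sqrt hQ.le, ← sq_sub_sq_eq_mul_coulombRadicand hB2 hr.ne']
    field_simp
  have hlt : ((w ^ 2 / r + a) / B) ^ 2 < 1 := by
    have hdiff := sq_sub_sq_eq_mul_coulombRadicand hB2 hr.ne'
    rw [div_pow, div_lt_one (by positivity)]
    nlinarith [mul_pos (pow_pos hw 2) hQ]
  obtain ⟨hlt₁, hlt₂⟩ := abs_lt.1 ((sq_lt_one_iff_abs_lt_one _).1 hlt)
  have hinner : HasDerivAt (fun t => (w ^ 2 / t + a) / B) (-(w ^ 2 / r ^ 2) / B) r := by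
    simpa [div_eq_mul_inv, neg_div] using
      (((hasDerivAt_inv hr.ne').const_mul (w ^ 2)).add_const a).div_const B
  refine (((hasDerivAt_arcsin hlt₁.ne' hlt₂.ne).comp r hinner).neg.div_const w).congr_deriv ?_
  rw [hsqrt]
  field_simp

theorem continuousOn_coulombPrimitive : ContinuousOn (coulombPrimitive a w B) (Ioi 0) := by
  refine (continuous_arcsin.comp_continuousOn ?_).neg.div_const w
  exact ((continuousOn_const.div continuousOn_id fun r hr => ne_of_gt hr).add
    continuousOn_const).div_const B

theorem continuousOn_coulombRadicand : ContinuousOn (coulombRadicand a w) (Ioi 0) :=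
  (continuousOn_const.sub (continuousOn_const.div continuousOn_id fun _ hr => ne_of_gt hr)).sub
    (continuousOn_const.div (continuousOn_pow 2) fun _ hr => pow_ne_zero 2 (ne_of_gt hr))

theorem tendsto_coulombPrimitive_atTop :
    Tendsto (coulombPrimitive a w B) atTop (𝓝 (-arcsin (a / B) / w)) := by
  have h : Tendsto (fun r : ℝ => (w ^ 2 / r + a) / B) atTop (𝓝 ((0 + a) / B)) :=
    ((tendsto_const_nhds.div_atTop tendsto_id).add_const a).div_const B
  rw [zero_add] at h
  exact ((continuous_arcsin.tendsto _).comp h).neg.div_const w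

theorem one_div_mul_sqrt_coulombRadicand_nonneg (a w r : ℝ) :
    0 ≤ 1 / (r ^ 2 * √(coulombRadicand a w r)) := by
  positivity


theorem lintegral_Ioc_coulomb (hw : 0 < w) (hB : 0 < B) (hB2 : B ^ 2 = w ^ 2 * (1 + 2 * a) + a ^ 2)
    (hx : 0 < x) (hxy : x ≤ y) (hQ : ∀ r ∈ Ioo x y, 0 < coulombRadicand a w r) :
    ∫⁻ r in Ioc x y, ENNReal.ofReal (1 / (r ^ 2 * √(coulombRadicand a w r))) =
      ENNReal.ofReal (coulombPrimitive a w B y - coulombPrimitive a w B x) :=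
  lintegral_Ioc_ofReal_of_hasDerivAt_of_nonneg hxy
    (continuousOn_coulombPrimitive.mono fun _ hr => hx.trans_le hr.1)
    (fun r hr => hasDerivAt_coulombPrimitive hw hB hB2 (hx.trans hr.1) (hQ r hr))
    (fun r _ => one_div_mul_sqrt_coulombRadicand_nonneg a w r)

theorem lintegral_Ioi_coulomb (hw : 0 < w) (hB : 0 < B) (hB2 : B ^ 2 = w ^ 2 * (1 + 2 * a) + a ^ 2)
    (hx : 0 < x) (hQ : ∀ r ∈ Ici x, 0 < coulombRadicand a w r) :
    ∫⁻ r in Ioi x, ENNReal.ofReal (1 / (r ^ 2 * √(coulombRadicand a w r))) =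
      ENNReal.ofReal (-arcsin (a / B) / w - coulombPrimitive a w B x) :=
  lintegral_Ioi_ofReal_of_hasDerivAt_of_nonneg'
    (fun r hr => hasDerivAt_coulombPrimitive hw hB hB2 (hx.trans_le hr) (hQ r hr))
    (fun r _ => one_div_mul_sqrt_coulombRadicand_nonneg a w r) tendsto_coulombPrimitive_atTop

end Coulomb

section MuffinTin

variable {α w z r B : ℝ}

theorem muffinTin_radicand_of_le (hr : r ≤ 1) :
    1 - 2 * muffinTin α r - w ^ 2 / r ^ 2 = coulombRadicand α w r := by
  rw [muffinTin, if_pos hr, coulombRadicand]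
  ring

theorem muffinTin_radicand_of_one_lt (hr : 1 < r) :
    1 - 2 * muffinTin α r - w ^ 2 / r ^ 2 = coulombRadicand 0 w r := by
  rw [muffinTin, if_neg hr.not_ge, coulombRadicand]
  ring

theorem coulombRadicand_one : coulombRadicand α w 1 = 1 - w ^ 2 := by
  rw [coulombRadicand]
  ring

/-- The radicand has no zero on `(z, 1]` and is positive at `1`. -/
theorem IsLargestZero.coulombRadicand_pos (hz : IsLargestZero (muffinTin α) w z) (hw : w ∈ Ioo 0 1)
    (hr : r ∈ Ioc z 1) : 0 < coulombRadicand α w r := by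
  obtain ⟨⟨hz0, -⟩, -, hlargest⟩ := hz
  have hne : ∀ s ∈ Ioc z 1, coulombRadicand α w s ≠ 0 := fun s hs => by
    simpa [muffinTin_radicand_of_le hs.2] using hlargest s hs.1
  by_contra! hle
  have hcont : ContinuousOn (coulombRadicand α w) (Icc r 1) :=
    continuousOn_coulombRadicand.mono fun s hs => hz0.trans (hr.1.trans_le hs.1)
  have h1 : 0 < coulombRadicand α w 1 := by
    rw [coulombRadicand_one]
    nlinarith [hw.1, hw.2]
  obtain ⟨s, hs, hs0⟩ := intermediate_value_Icc hr.2 hcont ⟨hle, h1.le⟩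
  exact hne s ⟨hr.1.trans_le hs.1, hs.2⟩ hs0

/-- The sign is fixed because `z < 1` is the larger root of the radicand. -/
theorem IsLargestZero.sq_div_add_eq (hz : IsLargestZero (muffinTin α) w z) (hw : w ∈ Ioo 0 1)
    (hB : 0 < B) (hB2 : B ^ 2 = w ^ 2 * (1 + 2 * α) + α ^ 2) : w ^ 2 / z + α = B := by
  obtain ⟨⟨hz0, hz1⟩, hzero, -⟩ := hz
  rw [muffinTin_radicand_of_le hz1.le] at hzero
  have hsq := sq_sub_sq_eq_mul_coulombRadicand hB2 hz0.ne'
  rw [hzero, mul_zero, sub_eq_zero] at hsq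
  have hpoly : (1 + 2 * α) * z ^ 2 - 2 * α * z - w ^ 2 = 0 := by
    rw [coulombRadicand] at hzero
    field_simp at hzero
    linear_combination hzero
  have hfactor : (1 - z) * (2 * α * z + w ^ 2 * (z + 1)) = (1 - w ^ 2) * z ^ 2 := by
    linear_combination -hpoly
  have hpos : 0 < w ^ 2 + α * z := by
    have : 0 < 2 * α * z + w ^ 2 * (z + 1) := by
      nlinarith [mul_pos (mul_pos hz0 hz0) (sub_pos.2 (pow_lt_one₀ hw.1.le hw.2 two_ne_zero))]
    nlinarith [mul_pos (pow_pos hw.1 2) (sub_pos.2 hz1)]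
  have hpos' : 0 < w ^ 2 / z + α := by
    rw [div_add' _ _ _ hz0.ne']
    exact div_pos (by linarith) hz0
  exact (sq_eq_sq₀ hpos'.le hB.le).1 hsq.symm

theorem thetaInt_muffinTin (hz : IsLargestZero (muffinTin α) w z) (hw : w ∈ Ioo 0 1)
    (hB : 0 < B) (hB2 : B ^ 2 = w ^ 2 * (1 + 2 * α) + α ^ 2) :
    thetaInt (muffinTin α) z w =
      ENNReal.ofReal ((π / 2 - arcsin ((w ^ 2 + α) / B)) / w) + ENNReal.ofReal (arcsin w / w) := by
  obtain ⟨hw0, hw1⟩ := hw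
  have hz0 : 0 < z := hz.1.1
  have hinner : ∫⁻ r in Ioc z 1,
      ENNReal.ofReal (1 / (r ^ 2 * √(1 - 2 * muffinTin α r - w ^ 2 / r ^ 2))) =
        ENNReal.ofReal ((π / 2 - arcsin ((w ^ 2 + α) / B)) / w) := by
    rw [setLIntegral_congr_fun measurableSet_Ioc fun r hr => by rw [muffinTin_radicand_of_le hr.2],
      lintegral_Ioc_coulomb hw0 hB hB2 hz0 hz.1.2.le
        fun r hr => hz.coulombRadicand_pos ⟨hw0, hw1⟩ (Ioo_subset_Ioc_self hr),
      coulombPrimitive, coulombPrimitive, hz.sq_div_add_eq ⟨hw0, hw1⟩ hB hB2, div_self hB.ne',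
      arcsin_one, div_one]
    congr 1
    ring
  have hQ : ∀ r ∈ Ici (1 : ℝ), 0 < coulombRadicand 0 w r := fun r hr => by
    have hr0 : 0 < r := zero_lt_one.trans_le hr
    have : w ^ 2 / r ^ 2 < 1 := (div_lt_one (pow_pos hr0 2)).2 (by nlinarith [mem_Ici.1 hr])
    simp only [coulombRadicand, mul_zero, zero_div, add_zero, sub_zero]
    linarith
  have houter : ∫⁻ r in Ioi 1,
      ENNReal.ofReal (1 / (r ^ 2 * √(1 - 2 * muffinTin α r - w ^ 2 / r ^ 2))) =
        ENNReal.ofReal (arcsin w / w) := by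
    rw [setLIntegral_congr_fun measurableSet_Ioi fun r hr => by
        rw [muffinTin_radicand_of_one_lt hr],
      lintegral_Ioi_coulomb (B := w) hw0 hw0 (by ring) zero_lt_one hQ, coulombPrimitive,
      div_one, add_zero, sq, mul_div_cancel_right₀ _ hw0.ne', zero_div, arcsin_zero, neg_zero,
      zero_div, zero_sub, neg_div, neg_neg]
  rw [thetaInt, ← Ioc_union_Ioi_eq_Ioi hz.1.2.le,
    lintegral_union measurableSet_Ioi (Ioc_disjoint_Ioi le_rfl), hinner, houter]

theorem arcsin_add_div_sub_arcsin (hα : α ≠ -1) (hw : w ∈ Ioo 0 1) (hB : 0 < B)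
    (hB2 : B ^ 2 = w ^ 2 * (1 + 2 * α) + α ^ 2) :
    arcsin ((w ^ 2 + α) / B) - arcsin w =
      arctan ((α / (1 + α)) * (√(1 - w ^ 2) / w)) - π * (if α < -1 then 1 else 0) := by
  obtain ⟨hw0, hw1⟩ := hw
  set s := √(1 - w ^ 2)
  have hs2 : s ^ 2 = 1 - w ^ 2 := sq_sqrt (by nlinarith)
  have hs : 0 < s := sqrt_pos.2 (by nlinarith)
  have hα' : 1 + α ≠ 0 := fun h => hα (by linarith)
  have hB_eq : B = √((w ^ 2 + α) ^ 2 + (w * s) ^ 2) := by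
    rw [← sqrt_sq hB.le, hB2, mul_pow, hs2]
    ring_nf
  have hw_eq : arcsin w = arctan (w / s) := by
    rw [← arcsin_div_sqrt_sq_add_sq w hs, hs2, add_sub_cancel, sqrt_one, div_one]
  have hden : 1 + (w ^ 2 + α) / (w * s) * (w / s) = (1 + α) / s ^ 2 := by
    field_simp
    linear_combination hs2
  have hquot : ((w ^ 2 + α) / (w * s) - w / s) / ((1 + α) / s ^ 2) = α / (1 + α) * (s / w) := by
    field_simp
    ring
  have hsign : (1 + α) / s ^ 2 < 0 ↔ α < -1 := by
    rw [div_neg_iff]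
    constructor
    · rintro (⟨-, h⟩ | ⟨h, -⟩) <;> nlinarith
    · intro h
      exact Or.inr ⟨by linarith, by positivity⟩
  rw [hB_eq, arcsin_div_sqrt_sq_add_sq _ (mul_pos hw0 hs), hw_eq,
    arctan_sub_arctan (div_pos hw0 hs) (by rw [hden]; exact div_ne_zero hα' (by positivity)),
    hden, hquot]
  simp only [hsign, mul_ite, mul_one, mul_zero]

end MuffinTin

theorem muffin_tin_deflection_angle_formula_general
    (α : ℝ) (hα1 : α ≠ -1)
    (r₀ : ℝ → ℝ)
    (hr₀ : ∀ w ∈ Set.Ioo (0 : ℝ) 1, IsLargestZero (muffinTin α) w (r₀ w))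
    (w : ℝ) (hw : w ∈ Set.Ioo (0 : ℝ) 1) :
    thetaInt (muffinTin α) (r₀ w) w ≠ ⊤ ∧
    deflAngle (muffinTin α) (r₀ w) w =
      2 * Real.arctan ((α / (1 + α)) * (Real.sqrt (1 - w ^ 2) / w)) -
        2 * Real.pi * (if α < -1 then 1 else 0) := by
  obtain ⟨hw0, hw1⟩ := hw
  have hdisc : 0 < w ^ 2 * (1 + 2 * α) + α ^ 2 := by
    nlinarith [sq_nonneg (w ^ 2 + α), mul_pos (mul_pos hw0 hw0) (sub_pos.2 hw1)]
  set B := √(w ^ 2 * (1 + 2 * α) + α ^ 2)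
  have hB : 0 < B := sqrt_pos.2 hdisc
  have hB2 : B ^ 2 = w ^ 2 * (1 + 2 * α) + α ^ 2 := sq_sqrt hdisc.le
  have hθ := thetaInt_muffinTin (hr₀ w ⟨hw0, hw1⟩) ⟨hw0, hw1⟩ hB hB2
  refine ⟨by simp [hθ], ?_⟩
  have hI₁ : 0 ≤ π / 2 - arcsin ((w ^ 2 + α) / B) :=
    sub_nonneg.2 (arcsin_le_pi_div_two _)
  have hI₂ : 0 ≤ arcsin w := arcsin_nonneg.2 hw0.le
  rw [deflAngle, hθ, ENNReal.toReal_add ENNReal.ofReal_ne_top ENNReal.ofReal_ne_top,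
    ENNReal.toReal_ofReal (div_nonneg hI₁ hw0.le), ENNReal.toReal_ofReal (div_nonneg hI₂ hw0.le)]
  have hscale : 2 * w * ((π / 2 - arcsin ((w ^ 2 + α) / B)) / w + arcsin w / w) =
      π - 2 * arcsin ((w ^ 2 + α) / B) + 2 * arcsin w := by
    field_simp
  rw [hscale]
  linear_combination (2 : ℝ) * arcsin_add_div_sub_arcsin hα1 ⟨hw0, hw1⟩ hB hB2

/-- For the truncated Coulomb potential with `α ∉ {0,-1}` and any
`w ∈ (0,1)`, the deflection angle is finite and equals
`2 arctan((α/(1+α))·√(1-w²)/w) - 2π·𝟙[α < -1]`. -/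
theorem muffin_tin_deflection_angle_formula
    (α : ℝ) (hα0 : α ≠ 0) (hα1 : α ≠ -1)
    (r₀ : ℝ → ℝ)
    (hr₀ : ∀ w ∈ Set.Ioo (0 : ℝ) 1, IsLargestZero (muffinTin α) w (r₀ w))
    (w : ℝ) (hw : w ∈ Set.Ioo (0 : ℝ) 1) :
    thetaInt (muffinTin α) (r₀ w) w ≠ ⊤ ∧
    deflAngle (muffinTin α) (r₀ w) w =
      2 * Real.arctan ((α / (1 + α)) * (Real.sqrt (1 - w ^ 2) / w)) -
        2 * Real.pi * (if α < -1 then 1 else 0) :=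
  muffin_tin_deflection_angle_formula_general α hα1 r₀ hr₀ w hw
end
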